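/- Let X be a Polish space equipped with its Borel σ-algebra, let I be a countable index set, for each i ∈ I let A_i be a countable type, and let S_i : X → Set A_i be maps such that for every i ∈ I and every a ∈ A_i the set { x ∈ X : a ∈ S_i(x) } is Borel. Call x and y separable if there exists i ∈ I such that S_i(x) and S_i(y) do not have the same cardinality. If there exists an uncountable subset of X whose elements are pairwise separable, then there exists a subset of X of cardinality 2^{ℵ₀} whose elements are pairwise separable. -/

import Mathlib

/-!
Recording, for every `i` and `n`, whether `S i x` has at least `n` elements gives a Borel map
`f : X → (I × ℕ → Bool)` that identifies exactly the non-separable pairs, so `f` has uncountable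
range. After refining the topology of `X` to a Polish one making `f` continuous, the perfect set
argument for analytic sets applies: inside a closed set `E` with `f '' E` uncountable, the points
all of whose relative neighbourhoods have uncountable image still have uncountable image (by
Lindelöf), so two of them with different images yield two closed pieces of small diameter with
disjoint images. Iterating gives a Cantor scheme whose branches are `2 ^ ℵ₀` points with pairwise
distinct images.
-/

open Set Function Topology CantorScheme Cardinal
open scoped ENNReal

theorem CantorScheme.Disjoint.eq_of_forall_mem {β α : Type*} {A : List β → Set α}
    (hA : CantorScheme.Disjoint A) {x y : ℕ → β} {z : α}
    (hx : ∀ n, z ∈ A (PiNat.res x n)) (hy : ∀ n, z ∈ A (PiNat.res y n)) : x = y := by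
  apply PiNat.res_injective
  ext n : 1
  induction n with
  | zero => simp
  | succ n ih =>
    rw [PiNat.res_succ, PiNat.res_succ, ih, List.cons.injEq, and_iff_left rfl]
    by_contra hne
    have hxn := hx (n + 1)
    rw [PiNat.res_succ, ih] at hxn
    have hyn := hy (n + 1)
    rw [PiNat.res_succ] at hyn
    exact Set.disjoint_left.1 (hA _ hne) hxn hyn

theorem countable_image_setOf_exists_nhdsWithin {Z Y : Type*} [TopologicalSpace Z]
    [HereditarilyLindelofSpace Z] (g : Z → Y) (E : Set Z) :
    (g '' {z ∈ E | ∃ t ∈ 𝓝[E] z, (g '' t).Countable}).Countable := by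
  refine (HereditarilyLindelofSpace.isLindelof _).induction_on (p := fun s => (g '' s).Countable)
    (fun s t hst ht => ht.mono (image_mono hst)) (fun S hS hsub => ?_) ?_
  · rw [sUnion_eq_biUnion, image_iUnion₂]
    exact hS.biUnion hsub
  · rintro z ⟨-, t, ht, htc⟩
    exact ⟨t, nhdsWithin_mono z (sep_subset _ _) ht, htc⟩

theorem exists_split_of_not_countable_image {Z Y : Type*} [MetricSpace Z]
    [SecondCountableTopology Z] [TopologicalSpace Y] [T25Space Y] {g : Z → Y}
    (hg : Continuous g) {E : Set Z} (hE : IsClosed E) (hunc : ¬(g '' E).Countable)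
    {ε : ℝ≥0∞} (hε : 0 < ε) :
    ∃ E₀ E₁ : Set Z,
      (IsClosed E₀ ∧ E₀ ⊆ E ∧ ¬(g '' E₀).Countable ∧ Metric.ediam E₀ ≤ ε) ∧
      (IsClosed E₁ ∧ E₁ ⊆ E ∧ ¬(g '' E₁).Countable ∧ Metric.ediam E₁ ≤ ε) ∧
      Disjoint (g '' E₀) (g '' E₁) := by
  set K := {z ∈ E | ∀ t ∈ 𝓝[E] z, ¬(g '' t).Countable}
  have hK : ¬(g '' K).Countable := by
    intro hKc
    refine hunc ((hKc.union (countable_image_setOf_exists_nhdsWithin g E)).mono ?_)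
    rw [← image_union]
    refine image_mono fun z hz => ?_
    by_cases h : ∀ t ∈ 𝓝[E] z, ¬(g '' t).Countable
    · exact Or.inl ⟨hz, h⟩
    · push Not at h
      exact Or.inr ⟨hz, h⟩
  obtain ⟨_, ⟨z₀, hz₀, rfl⟩, _, ⟨z₁, hz₁, rfl⟩, hne⟩ :=
    not_subsingleton_iff.1 fun h => hK h.countable
  obtain ⟨U₀, hzU₀, hU₀, U₁, hzU₁, hU₁, hdisj⟩ := exists_open_nhds_disjoint_closure hne
  have piece : ∀ z ∈ K, ∀ U : Set Y, IsOpen U → g z ∈ U →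
      let P := E ∩ Metric.closedEBall z (ε / 2) ∩ g ⁻¹' closure U
      IsClosed P ∧ P ⊆ E ∧ ¬(g '' P).Countable ∧ Metric.ediam P ≤ ε := by
    intro z hz U hU hzU
    refine ⟨(hE.inter Metric.isClosed_closedEBall).inter (isClosed_closure.preimage hg),
      fun w hw => hw.1.1,
      fun hc => hz.2 (E ∩ (Metric.eball z (ε / 2) ∩ g ⁻¹' U)) ?_ (hc.mono (image_mono ?_)), ?_⟩
    · exact inter_mem_nhdsWithin E (Filter.inter_mem
        (Metric.eball_mem_nhds z (ENNReal.half_pos hε.ne')) (hg.continuousAt.preimage_mem_nhds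
          (hU.mem_nhds hzU)))
    · rintro w ⟨hwE, hwb, hwU⟩
      exact ⟨⟨hwE, Metric.eball_subset_closedEBall hwb⟩, subset_closure hwU⟩
    · calc Metric.ediam _ ≤ Metric.ediam (Metric.closedEBall z (ε / 2)) :=
            Metric.ediam_mono fun w hw => hw.1.2
        _ ≤ 2 * (ε / 2) := Metric.ediam_closedEBall_le
        _ = ε := ENNReal.mul_div_cancel two_ne_zero ENNReal.ofNat_ne_top
  refine ⟨_, _, piece z₀ hz₀ U₀ hU₀ hzU₀, piece z₁ hz₁ U₁ hU₁ hzU₁, hdisj.mono ?_ ?_⟩ <;>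
    exact image_subset_iff.2 fun w hw => hw.2

theorem Continuous.exists_nat_bool_injective_comp {Z Y : Type*} [TopologicalSpace Z]
    [PolishSpace Z] [TopologicalSpace Y] [T25Space Y] {g : Z → Y} (hg : Continuous g)
    (hunc : ¬(range g).Countable) : ∃ h : (ℕ → Bool) → Z, Injective (g ∘ h) := by
  let := TopologicalSpace.upgradeIsCompletelyMetrizable Z
  obtain ⟨u, -, upos', hu⟩ := exists_seq_strictAnti_tendsto' (zero_lt_one' ℝ≥0∞)
  have upos := fun n => (upos' n).1
  let P := {E : Set Z // IsClosed E ∧ ¬(g '' E).Countable}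
  choose E₀ E₁ h₀ h₁ hdisj using
    fun {E : Set Z} (hE : IsClosed E) (hEunc : ¬(g '' E).Countable) {ε : ℝ≥0∞} (hε : 0 < ε) =>
    exists_split_of_not_countable_image hg hE hEunc hε
  let DP : List Bool → P := fun l => by
    induction l with
    | nil => exact ⟨univ, isClosed_univ, by rwa [image_univ]⟩
    | cons a l ih =>
      cases a
      · exact ⟨E₀ ih.2.1 ih.2.2 (upos (l.length + 1)), (h₀ _ _ _).1, (h₀ _ _ _).2.2.1⟩
      · exact ⟨E₁ ih.2.1 ih.2.2 (upos (l.length + 1)), (h₁ _ _ _).1, (h₁ _ _ _).2.2.1⟩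
  let D : List Bool → Set Z := fun l => (DP l).val
  have hanti : ClosureAntitone D := by
    refine Antitone.closureAntitone (fun l a => ?_) fun l => (DP l).2.1
    cases a
    · exact (h₀ _ _ _).2.1
    · exact (h₁ _ _ _).2.1
  have hdiam : VanishingDiam D := by
    intro x
    refine tendsto_of_tendsto_of_tendsto_of_le_of_le' tendsto_const_nhds hu (by simp) ?_
    rw [Filter.eventually_atTop]
    refine ⟨1, fun m hm => ?_⟩
    obtain ⟨n, rfl⟩ := Nat.exists_eq_add_of_le' hm
    dsimp only [D]
    rw [PiNat.res_succ]
    cases x n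
    · exact (h₀ _ _ _).2.2.2.trans_eq (by rw [PiNat.res_length])
    · exact (h₁ _ _ _).2.2.2.trans_eq (by rw [PiNat.res_length])
  have hdisj_image : CantorScheme.Disjoint fun l => g '' D l := by
    rintro l (_ | _) (_ | _) hab <;> try exact absurd rfl hab
    · exact hdisj _ _ _
    · exact (hdisj _ _ _).symm
  have hdom : ∀ x, x ∈ (inducedMap D).1 := by
    rw [← eq_univ_iff_forall]
    refine hanti.map_of_vanishingDiam hdiam fun l => ?_
    exact image_nonempty.1 (not_subsingleton_iff.1 fun h => (DP l).2.2 h.countable).nonempty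
  refine ⟨fun x => (inducedMap D).2 ⟨x, hdom x⟩, fun x y (hxy : g _ = g _) => ?_⟩
  refine hdisj_image.eq_of_forall_mem (z := g ((inducedMap D).2 ⟨x, hdom x⟩))
    (fun n => mem_image_of_mem g (map_mem _ n)) fun n => ?_
  rw [hxy]
  exact mem_image_of_mem g (map_mem _ n)

theorem Measurable.exists_injOn_of_not_countable_range {X Y : Type*} [TopologicalSpace X]
    [PolishSpace X] [MeasurableSpace X] [BorelSpace X] [TopologicalSpace Y] [T25Space Y]
    [SecondCountableTopology Y] [MeasurableSpace Y] [OpensMeasurableSpace Y] {f : X → Y}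
    (hf : Measurable f) (hunc : ¬(range f).Countable) : ∃ T : Set X, #T = 𝔠 ∧ InjOn f T := by
  obtain ⟨t', -, hcont, hpolish⟩ := hf.exists_continuous
  obtain ⟨h, hinj⟩ := @Continuous.exists_nat_bool_injective_comp X Y t' hpolish _ _ f hcont hunc
  refine ⟨range h, ?_, ?_⟩
  · simpa using Cardinal.mk_range_eq_of_injective hinj.of_comp
  · rintro _ ⟨a, rfl⟩ _ ⟨b, rfl⟩ hab
    exact congrArg h (hinj hab)

theorem Cardinal.natCast_le_mk_iff_exists_finset {α : Type*} {s : Set α} {n : ℕ} :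
    (n : Cardinal) ≤ #s ↔ ∃ t : Finset α, t.card = n ∧ ↑t ⊆ s := by
  simp only [le_mk_iff_exists_subset, mk_set_eq_nat_iff_finset]
  aesop

theorem Cardinal.eq_of_forall_natCast_le_iff {c d : Cardinal} (hc : c ≤ ℵ₀) (hd : d ≤ ℵ₀)
    (h : ∀ n : ℕ, (n : Cardinal) ≤ c ↔ (n : Cardinal) ≤ d) : c = d := by
  rw [← toENat_eq_iff_of_le_aleph0 hc hd]
  refine le_antisymm (ENat.forall_natCast_le_iff_le.1 fun n hn => ?_)
    (ENat.forall_natCast_le_iff_le.1 fun n hn => ?_) <;> simpa [h] using hn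

theorem measurableSet_setOf_natCast_le_mk {X α : Type*} [MeasurableSpace X] [Countable α]
    {s : X → Set α} (hs : ∀ a, MeasurableSet {x | a ∈ s x}) (n : ℕ) :
    MeasurableSet {x | (n : Cardinal) ≤ #(s x)} := by
  have : {x | (n : Cardinal) ≤ #(s x)} =
      ⋃ t : {t : Finset α // t.card = n}, ⋂ a ∈ t.1, {x | a ∈ s x} := by
    ext x
    simp [Cardinal.natCast_le_mk_iff_exists_finset, subset_def]
  rw [this]
  exact .iUnion fun t => t.1.measurableSet_biInter fun a _ => hs a

section CardProfile

variable {X I : Type*} {A : I → Type*} (S : ∀ i, X → Set (A i))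

open Classical in
noncomputable def cardProfile (x : X) : I × ℕ → Bool :=
  fun p => decide ((p.2 : Cardinal) ≤ #(S p.1 x))

variable {S}

theorem cardProfile_eq_iff [∀ i, Countable (A i)] {x y : X} :
    cardProfile S x = cardProfile S y ↔ ∀ i, #(S i x) = #(S i y) := by
  refine ⟨fun hxy i => Cardinal.eq_of_forall_natCast_le_iff mk_le_aleph0 mk_le_aleph0 fun n => ?_,
    fun h => funext fun p => by simp only [cardProfile, h]⟩
  simpa [cardProfile] using congrFun hxy (i, n)

theorem measurable_cardProfile [MeasurableSpace X] [∀ i, Countable (A i)]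
    (hS : ∀ i a, MeasurableSet {x | a ∈ S i x}) : Measurable (cardProfile S) :=
  measurable_pi_lambda _ fun p => measurable_to_bool <| by
    simpa [cardProfile, preimage] using measurableSet_setOf_natCast_le_mk (hS p.1) p.2

end CardProfile

theorem continuum_many_pairwise_separable (X : Type*) [TopologicalSpace X] [PolishSpace X]
    [MeasurableSpace X] [BorelSpace X]
    (I : Type*) [Countable I] (A : I → Type*) [∀ i, Countable (A i)]
    (S : ∀ i : I, X → Set (A i))
    (h : ∀ (i : I) (a : A i), MeasurableSet {x : X | a ∈ S i x})
    (huncount : ∃ T : Set X, ¬ T.Countable ∧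
      ∀ x ∈ T, ∀ y ∈ T, x ≠ y → ∃ i : I, Cardinal.mk (S i x) ≠ Cardinal.mk (S i y)) :
    ∃ T : Set X, Cardinal.mk T = Cardinal.continuum ∧
      ∀ x ∈ T, ∀ y ∈ T, x ≠ y → ∃ i : I, Cardinal.mk (S i x) ≠ Cardinal.mk (S i y) := by
  obtain ⟨T, hT, hsep⟩ := huncount
  have hinjT : InjOn (cardProfile S) T := fun x hx y hy hxy => by
    by_contra hne
    obtain ⟨i, hi⟩ := hsep x hx y hy hne
    exact hi (cardProfile_eq_iff.1 hxy i)
  obtain ⟨T', hT', hinj⟩ := (measurable_cardProfile h).exists_injOn_of_not_countable_range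
    fun hc => hT ((mapsTo_range _ T).countable_of_injOn hinjT hc)
  refine ⟨T', hT', fun x hx y hy hne => ?_⟩
  by_contra! hsame
  exact hne (hinj hx hy (cardProfile_eq_iff.2 hsame))
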